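/- arXiv:2411.16660 — 5 statements merged into one kernel-verified Lean document; each statement's English description precedes it below -/
import Mathlib

section
/- For a random variable t with truncated exponential distribution on [l, M] with parameter λ, if (M-l)λ ≥ 2 and lλ ≤ 1, then for real numbers α, β ≥ l with α ≤ M/2 and α + β < M, the conditional probability P[t ≤ α + β | t ≥ α] ≤ 2λβ. -/
/-- For `t ~ Texp(λ, M, l)`, if `(M-l)λ ≥ 2` and `lλ ≤ 1`, then for `α, β ≥ l`
with `α ≤ M/2` and `α + β < M`, we have `P[t ≤ α+β | t ≥ α] ≤ 2λβ`.
The conditional probability is the ratio of integrals of the density. -/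
theorem texp_conditional_bound (l M lam : ℝ) (hl : 0 < l) (hlM : l < M) (hlam : 0 < lam)
    (h1 : 2 ≤ (M - l) * lam) (h2 : l * lam ≤ 1)
    (α β : ℝ) (hα : l ≤ α) (hβ : l ≤ β) (hαM : α ≤ M / 2) (hαβ : α + β < M) :
    (∫ z in α..(α + β),
        lam * Real.exp (-lam * z) / (Real.exp (-lam * l) - Real.exp (-lam * M)))
      / (∫ z in α..M,
        lam * Real.exp (-lam * z) / (Real.exp (-lam * l) - Real.exp (-lam * M)))
      ≤ 2 * lam * β := by
  set C : ℝ := Real.exp (-lam * l) - Real.exp (-lam * M) with hC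
  have hCpos : 0 < C := by
    apply sub_pos.mpr
    apply Real.exp_lt_exp.mpr
    nlinarith
  have key : ∀ a b : ℝ, (∫ z in a..b, lam * Real.exp (-lam * z) / C)
      = (Real.exp (-lam * a) - Real.exp (-lam * b)) / C := by
    intro a b
    have hderiv : ∀ z : ℝ, HasDerivAt (fun z => -Real.exp (-lam * z) / C)
        (lam * Real.exp (-lam * z) / C) z := by
      intro z
      have h1' : HasDerivAt (fun z : ℝ => -lam * z) (-lam) z := by
        simpa using (hasDerivAt_id z).const_mul (-lam)
      have h2' := (Real.hasDerivAt_exp (-lam * z)).comp z h1'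
      have h3' := (h2'.neg).div_const C
      have h4 : HasDerivAt (fun z => -Real.exp (-lam * z) / C) (-(Real.exp (-lam * z) * -lam) / C) z := h3'
      convert h4 using 1
      ring
    have hcont : Continuous fun z : ℝ => lam * Real.exp (-lam * z) / C := by
      continuity
    rw [intervalIntegral.integral_eq_sub_of_hasDerivAt (fun z _ => hderiv z)
      (hcont.intervalIntegrable a b)]
    ring
  rw [key, key]
  rw [div_div_div_comm, div_self hCpos.ne', div_one]
  have hexp1 : Real.exp (-lam * (α + β)) ≤ Real.exp (-lam * α) := by
    apply Real.exp_le_exp.mpr; nlinarith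
  have hMα : 1 ≤ lam * (M - α) := by nlinarith
  have hhalf : Real.exp (-lam * M) ≤ Real.exp (-lam * α) / 2 := by
    have h2e : (2 : ℝ) ≤ Real.exp 1 := by
      have := Real.add_one_le_exp 1; linarith
    have : Real.exp (-lam * M) = Real.exp (-lam * α) * Real.exp (-(lam * (M - α))) := by
      rw [← Real.exp_add]; ring_nf
    rw [this]
    have he : Real.exp (-(lam * (M - α))) ≤ Real.exp (-1) := by
      apply Real.exp_le_exp.mpr; linarith
    have he2 : Real.exp (-1) ≤ 1 / 2 := by
      rw [Real.exp_neg]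
      rw [inv_le_comm₀ (Real.exp_pos 1) (by norm_num)]
      simpa using h2e
    have hpos := Real.exp_pos (-lam * α)
    nlinarith [Real.exp_pos (-(lam * (M - α)))]
  have hden : 0 < Real.exp (-lam * α) - Real.exp (-lam * M) := by
    have := Real.exp_pos (-lam * α)
    linarith
  rw [div_le_iff₀ hden]
  -- 1 - exp(-λβ) ≤ λβ, as exp(-λα)·(1 - e^{-λβ})
  have hmain : Real.exp (-lam * α) - Real.exp (-lam * (α + β))
      ≤ lam * β * Real.exp (-lam * α) := by
    have h := Real.add_one_le_exp (-(lam * β))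
    have : Real.exp (-lam * (α + β)) = Real.exp (-lam * α) * Real.exp (-(lam * β)) := by
      rw [← Real.exp_add]; ring_nf
    rw [this]
    have hpos := Real.exp_pos (-lam * α)
    nlinarith
  have hβpos : 0 < β := lt_of_lt_of_le hl hβ
  nlinarith [Real.exp_pos (-lam * α)]
end

section
/- Let (X, d) be a complete separable metric space, T an (r,r)-net on X, and R ≥ r. If X admits a (2R+r, D)-cover with m layers, then T admits an (R, 2R+2r+D)-padded decomposition with m layers. -/
/-
Thicken every member of the `(2R + r)`-disjoint cover by `R + r/2`. Within a layer the
thickenings stay disjoint, their diameters grow by at most `2R + r`, and each one contains the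
`R`-ball around every point of the member it thickens, since `R < R + r/2`. Points of `T` that no
thickening of a given layer reaches are added to that layer as singletons, so that every layer
partitions `T`.
-/

open Metric

/-- A family of sets is `r`-disjoint: distinct members are at distance `> r`. -/
def RDisjointFam {X : Type*} [MetricSpace X] (r : ℝ) (U : Set (Set X)) : Prop :=
  ∀ A ∈ U, ∀ B ∈ U, A ≠ B → ∀ a ∈ A, ∀ b ∈ B, r < dist a b

/-- A family of sets is `D`-bounded: each member has diameter at most `D`. -/
def DBoundedFam {X : Type*} [MetricSpace X] (D : ℝ) (U : Set (Set X)) : Prop :=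
  ∀ A ∈ U, ∀ a ∈ A, ∀ b ∈ A, dist a b ≤ D

/-- An `(r, D)`-cover of `X` with `m` layers. -/
def IsCover {X : Type*} [MetricSpace X] (r D : ℝ) {m : ℕ} (U : Fin m → Set (Set X)) : Prop :=
  (∀ i, RDisjointFam r (U i)) ∧ (∀ i, DBoundedFam D (U i)) ∧ ∀ x : X, ∃ i, ∃ A ∈ U i, x ∈ A

/-- An `(R, D)`-padded decomposition with `m` layers associated to the net `T`:
each layer partitions `T` (covers `T`, members pairwise disjoint on `T`), is `D`-bounded,
and every `x ∈ T` has its `R`-ball contained in some member of some layer. -/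
def IsPaddedDecomposition {X : Type*} [MetricSpace X] (T : Set X) (R D : ℝ) {m : ℕ}
    (P : Fin m → Set (Set X)) : Prop :=
  (∀ i, T ⊆ ⋃₀ (P i)) ∧
  (∀ i, ∀ A ∈ P i, ∀ B ∈ P i, A ≠ B → A ∩ B ∩ T = ∅) ∧
  (∀ i, DBoundedFam D (P i)) ∧
  (∀ x ∈ T, ∃ i, ∃ C ∈ P i, ball x R ⊆ C)

section

variable {X : Type*} [MetricSpace X]

theorem DBoundedFam.mono {D D' : ℝ} {F : Set (Set X)} (hF : DBoundedFam D F) (h : D ≤ D') :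
    DBoundedFam D' F :=
  fun A hA a ha b hb => (hF A hA a ha b hb).trans h

theorem IsCover.bound_nonneg {r D : ℝ} {m : ℕ} {U : Fin m → Set (Set X)} (hU : IsCover r D U)
    (x : X) : 0 ≤ D := by
  obtain ⟨i, A, hA, hxA⟩ := hU.2.2 x
  simpa using hU.2.1 i A hA x hxA x hxA

theorem RDisjointFam.disjoint_thickening {δ : ℝ} {U : Set (Set X)}
    (hU : RDisjointFam (2 * δ) U) {A B : Set X} (hA : A ∈ U) (hB : B ∈ U) (hAB : A ≠ B) :
    Disjoint (thickening δ A) (thickening δ B) := by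
  refine Set.disjoint_left.mpr fun y hyA hyB => ?_
  obtain ⟨a, ha, hya⟩ := mem_thickening_iff.mp hyA
  obtain ⟨b, hb, hyb⟩ := mem_thickening_iff.mp hyB
  have hab := hU A hA B hB hAB a ha b hb
  linarith [dist_triangle_left a b y]

theorem RDisjointFam.pairwise_disjoint_image_thickening {δ : ℝ} {U : Set (Set X)}
    (hU : RDisjointFam (2 * δ) U) : (thickening δ '' U).Pairwise Disjoint := by
  rintro _ ⟨A, hA, rfl⟩ _ ⟨B, hB, rfl⟩ hne
  exact hU.disjoint_thickening hA hB fun hAB => hne (hAB ▸ rfl)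

theorem DBoundedFam.image_thickening {δ D : ℝ} {U : Set (Set X)} (hU : DBoundedFam D U) :
    DBoundedFam (2 * δ + D) (thickening δ '' U) := by
  rintro _ ⟨A, hA, rfl⟩ a ha b hb
  obtain ⟨p, hp, hap⟩ := mem_thickening_iff.mp ha
  obtain ⟨q, hq, hbq⟩ := mem_thickening_iff.mp hb
  have hpq := hU A hA p hp q hq
  linarith [dist_triangle4 a p q b, dist_comm q b]

end

def extendBySingletons {X : Type*} (T : Set X) (F : Set (Set X)) : Set (Set X) :=
  F ∪ (fun x => {x}) '' (T \ ⋃₀ F)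

section

variable {X : Type*} {T : Set X} {F : Set (Set X)}

theorem subset_sUnion_extendBySingletons : T ⊆ ⋃₀ extendBySingletons T F := by
  intro x hxT
  by_cases hxF : x ∈ ⋃₀ F
  · exact Set.sUnion_mono Set.subset_union_left hxF
  · exact ⟨{x}, Or.inr ⟨x, ⟨hxT, hxF⟩, rfl⟩, rfl⟩

theorem Set.Pairwise.extendBySingletons (hF : F.Pairwise Disjoint) :
    (extendBySingletons T F).Pairwise Disjoint := by
  have hsingle : ∀ A ∈ F, ∀ x ∉ ⋃₀ F, Disjoint A {x} := fun A hA x hx =>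
    Set.disjoint_singleton_right.mpr fun hxA => hx ⟨A, hA, hxA⟩
  rintro _ (hA | ⟨x, ⟨-, hx⟩, rfl⟩) _ (hB | ⟨y, ⟨-, hy⟩, rfl⟩) hne
  · exact hF hA hB hne
  · exact hsingle _ hA y hy
  · exact (hsingle _ hB x hx).symm
  · exact Set.disjoint_singleton.mpr fun hxy => hne (hxy ▸ rfl)

theorem DBoundedFam.extendBySingletons [MetricSpace X] {D : ℝ} (hF : DBoundedFam D F)
    (hD : T.Nonempty → 0 ≤ D) : DBoundedFam D (extendBySingletons T F) := by
  rintro _ (hA | ⟨x, ⟨hxT, -⟩, rfl⟩) a ha b hb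
  · exact hF _ hA a ha b hb
  · rw [Set.mem_singleton_iff.mp ha, Set.mem_singleton_iff.mp hb, dist_self]
    exact hD ⟨x, hxT⟩

end

theorem cover_to_padded_general {X : Type*} [MetricSpace X]
    (T : Set X) (r : ℝ) (hr : 0 < r)
    (R : ℝ) (hR : r ≤ R) (D : ℝ) (m : ℕ)
    (hU : ∃ U : Fin m → Set (Set X), IsCover (2 * R + r) D U) :
    ∃ P : Fin m → Set (Set X), IsPaddedDecomposition T R (2 * R + 2 * r + D) P := by
  obtain ⟨U, hU⟩ := hU
  set δ := R + r / 2
  have hδ : 2 * R + r = 2 * δ := by ring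
  rw [hδ] at hU
  refine ⟨fun i => extendBySingletons T (thickening δ '' U i), fun i => ?_, fun i => ?_,
    fun i => ?_, fun x _ => ?_⟩
  · exact subset_sUnion_extendBySingletons
  · intro A hA B hB hAB
    rw [((hU.1 i).pairwise_disjoint_image_thickening.extendBySingletons hA hB hAB).inter_eq,
      Set.empty_inter]
  · refine (((hU.2.1 i).image_thickening).mono (by linarith)).extendBySingletons ?_
    rintro ⟨x, -⟩
    linarith [hU.bound_nonneg x]
  · obtain ⟨i, A, hA, hxA⟩ := hU.2.2 x
    exact ⟨i, thickening δ A, Or.inl ⟨A, hA, rfl⟩,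
      (ball_subset_ball (by linarith)).trans (ball_subset_thickening hxA δ)⟩

/-- If a complete separable metric space `X` with an `(r,r)`-net `T` admits a `(2R+r, D)`-cover
with `m` layers, then `T` admits an `(R, 2R+2r+D)`-padded decomposition with `m` layers. -/
theorem cover_to_padded {X : Type*} [MetricSpace X] [CompleteSpace X]
    [TopologicalSpace.SeparableSpace X]
    (T : Set X) (r : ℝ) (hr : 0 < r)
    (hsep : ∀ x ∈ T, ∀ y ∈ T, x ≠ y → r ≤ dist x y)
    (hcov : ∀ x : X, ∃ y ∈ T, dist x y < r)
    (R : ℝ) (hR : r ≤ R) (D : ℝ) (m : ℕ)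
    (hU : ∃ U : Fin m → Set (Set X), IsCover (2 * R + r) D U) :
    ∃ P : Fin m → Set (Set X), IsPaddedDecomposition T R (2 * R + 2 * r + D) P :=
  cover_to_padded_general T r hr R hR D m hU
end

section
/- Let (X, d) be a complete separable metric space, T an (r,r)-net on X, and R ≥ r. If T admits an (R+2r, D)-padded decomposition with m layers, then X admits an (R, D)-cover with m layers. -/
open Metric

/-!
Shrink every piece `A` of the padded decomposition to `A'' = {x | ball x (R + r) ⊆ A}`.
If `a ∈ A''` and `b ∈ B''` with `dist a b ≤ R`, a point `y ∈ T` within `r` of `b` lies in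
both `ball a (R + r) ⊆ A` and `ball b (R + r) ⊆ B`, so `A = B` by disjointness on `T`.
Every `x` is within `r` of some `y ∈ T`, whose `(R + 2r)`-ball lies in a piece `C`;
then `ball x (R + r) ⊆ C`, so `x ∈ C''`.
-/

open Set

section PseudoMetric

variable {X : Type*} [PseudoMetricSpace X] {δ : ℝ} {A : Set X}

def shrink (δ : ℝ) (A : Set X) : Set X := {x | ball x δ ⊆ A}

theorem shrink_subset (hδ : 0 < δ) : shrink δ A ⊆ A := fun _ hx => hx (mem_ball_self hδ)

theorem mem_shrink_of_ball_subset {ε : ℝ} {x y : X} (hxy : dist x y ≤ ε)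
    (hA : ball y (δ + ε) ⊆ A) : x ∈ shrink δ A :=
  (ball_subset_ball' (by linarith)).trans hA

end PseudoMetric

section Metric

variable {X : Type*} [MetricSpace X] {P : Set (Set X)}

theorem DBoundedFam.image_shrink {D δ : ℝ} (hδ : 0 < δ) (hP : DBoundedFam D P) :
    DBoundedFam D (shrink δ '' P) := by
  rintro _ ⟨A, hA, rfl⟩ a ha b hb
  exact hP A hA a (shrink_subset hδ ha) b (shrink_subset hδ hb)

theorem rDisjointFam_image_shrink {T : Set X} {r R : ℝ}
    (hT : ∀ x : X, ∃ y ∈ T, dist x y < r)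
    (hP : ∀ A ∈ P, ∀ B ∈ P, A ≠ B → A ∩ B ∩ T = ∅) :
    RDisjointFam R (shrink (R + r) '' P) := by
  rintro _ ⟨A, hA, rfl⟩ _ ⟨B, hB, rfl⟩ hne a ha b hb
  by_contra! hab
  obtain ⟨y, hyT, hby⟩ := hT b
  have hyA : y ∈ A := ha <| mem_ball.2 <| calc
    dist y a ≤ dist a b + dist b y := by rw [dist_comm y a]; exact dist_triangle a b y
    _ < R + r := by linarith
  have hyB : y ∈ B := hb <| mem_ball.2 <| by
    rw [dist_comm]; linarith [dist_nonneg (x := a) (y := b)]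
  have hAB : A ≠ B := by rintro rfl; exact hne rfl
  exact (hP A hA B hB hAB).subset ⟨⟨hyA, hyB⟩, hyT⟩

end Metric

theorem padded_to_cover_general {X : Type*} [MetricSpace X]
    (T : Set X) (r : ℝ) (hr : 0 < r)
    (hcov : ∀ x : X, ∃ y ∈ T, dist x y < r)
    (R : ℝ) (hR : r ≤ R) (D : ℝ) (m : ℕ)
    (hP : ∃ P : Fin m → Set (Set X), IsPaddedDecomposition T (R + 2 * r) D P) :
    ∃ U : Fin m → Set (Set X), IsCover R D U := by
  obtain ⟨P, -, hPdisj, hPbd, hPpad⟩ := hP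
  refine ⟨fun i => shrink (R + r) '' P i, fun i => rDisjointFam_image_shrink hcov (hPdisj i),
    fun i => (hPbd i).image_shrink (by linarith), fun x => ?_⟩
  obtain ⟨y, hyT, hxy⟩ := hcov x
  obtain ⟨i, C, hC, hball⟩ := hPpad y hyT
  refine ⟨i, _, mem_image_of_mem _ hC, mem_shrink_of_ball_subset hxy.le ?_⟩
  rwa [add_assoc, ← two_mul]

/-- If the `(r,r)`-net `T` of a complete separable metric space `X` admits an
`(R+2r, D)`-padded decomposition with `m` layers, then `X` admits an `(R, D)`-cover
with `m` layers. -/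
theorem padded_to_cover {X : Type*} [MetricSpace X] [CompleteSpace X]
    [TopologicalSpace.SeparableSpace X]
    (T : Set X) (r : ℝ) (hr : 0 < r)
    (hsep : ∀ x ∈ T, ∀ y ∈ T, x ≠ y → r ≤ dist x y)
    (hcov : ∀ x : X, ∃ y ∈ T, dist x y < r)
    (R : ℝ) (hR : r ≤ R) (D : ℝ) (m : ℕ)
    (hP : ∃ P : Fin m → Set (Set X), IsPaddedDecomposition T (R + 2 * r) D P) :
    ∃ U : Fin m → Set (Set X), IsCover R D U :=
  padded_to_cover_general T r hr hcov R hR D m hP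
end

section
/- Let 𝒜 be a (possibly infinite) constraint satisfaction problem on a set X with range a compact Polish space Y equipped with a Borel probability measure, where each constraint has finite domain. If e · p(𝒜) · (d(𝒜) + 1) < 1, where p(𝒜) is the supremum of the violation probabilities of constraints and d(𝒜) is the supremum over constraints A of the number of other constraints whose domains intersect dom(A), then 𝒜 has a solution, i.e., there is a coloring f : X → Y satisfying all constraints. -/
open MeasureTheory

/-- A constraint on `X` with range `Y`: a finite domain together with a measurable set of
forbidden colorings of the domain. -/
structure CSPConstraint (X Y : Type*) [MeasurableSpace Y] where
  dom : Finset X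
  bad : Set ({x // x ∈ dom} → Y)
  meas : MeasurableSet bad


/-!
For finitely many constraints, view the violation events as events for the product measure
`μ^X`: the event of `A` depends only on the coordinates in `dom A`, so it is independent of any
event built from constraints whose domains miss `dom A`. The symmetric local lemma, proved by the
usual induction showing `P(E i | no E j, j ∈ S) ≤ q` with `q = 1/(d+2)`, then gives a
satisfying coloring with positive probability. For infinitely many constraints, outer regularity
enlarges each forbidden set to an open set of measure still at most `(e (d+1))⁻¹`; the colorings
avoiding an enlarged forbidden set form a closed subset of the compact space `Y^X`, and these
closed sets have the finite intersection property by the finite case.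
-/

open Finset
open scoped ENNReal

lemma Real.inv_exp_one_mul_le (d : ℕ) :
    (Real.exp 1 * (d + 1))⁻¹ ≤ (d + 2 : ℝ)⁻¹ * (1 - (d + 2 : ℝ)⁻¹) ^ d := by
  have he : (1 + ((d + 1 : ℕ) : ℝ)⁻¹) ^ (d + 1) ≤ Real.exp 1 := Real.one_add_inv_pow_le_exp
  have h1 : (1 : ℝ) + ((d + 1 : ℕ) : ℝ)⁻¹ = (d + 2) / (d + 1) := by push_cast; field_simp; ring
  have h2 : (1 : ℝ) - (d + 2 : ℝ)⁻¹ = (d + 1) / (d + 2) := by field_simp; ring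
  rw [h1, div_pow, div_le_iff₀ (by positivity)] at he
  rw [h2, div_pow, inv_mul_eq_div, div_div, ← pow_succ, le_div_iff₀ (by positivity),
    inv_mul_le_iff₀ (by positivity)]
  linarith [show Real.exp 1 * (d + 1) * (d + 1) ^ d = Real.exp 1 * (d + 1) ^ (d + 1) by ring]

namespace MeasureTheory

variable {ι : Type*} {X : ι → Type*} [∀ i, MeasurableSpace (X i)]

lemma measurableSet_cylinderEvents_cylinder {Δ : Set ι} {I : Finset ι} (hI : ↑I ⊆ Δ)
    {S : Set (∀ i : I, X i)} (hS : MeasurableSet S) :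
    MeasurableSet[cylinderEvents Δ] (cylinder I S) := by
  have : Measurable[cylinderEvents Δ] (I.restrict (π := X)) := by
    rw [@measurable_pi_iff]
    exact fun i ↦ measurable_cylinderEvent_apply (hI i.2)
  exact this hS

lemma exists_isOpen_superset_measure_pi_lt {ι Y : Type*} [Fintype ι] [TopologicalSpace Y]
    [PolishSpace Y] [MeasurableSpace Y] [BorelSpace Y] (μ : Measure Y) [IsFiniteMeasure μ]
    {S : Set (ι → Y)} {r : ℝ≥0∞} (h : Measure.pi (fun _ ↦ μ) S < r) :
    ∃ U ⊇ S, IsOpen U ∧ Measure.pi (fun _ ↦ μ) U < r :=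
  S.exists_isOpen_lt_of_lt r h

end MeasureTheory

lemma Finset.card_filter_le_encard {α : Type*} {S : Set α} {s : Finset α} (hs : ↑s ⊆ S)
    (r : α → Prop) [DecidablePred r] : ((s.filter r).card : ℕ∞) ≤ {b | b ∈ S ∧ r b}.encard := by
  rw [← Set.encard_coe_eq_coe_finsetCard, coe_filter]
  exact Set.encard_mono fun b hb ↦ ⟨hs hb.1, hb.2⟩

namespace ProbabilityTheory

section LocalLemma

variable {Ω ι : Type*} [MeasurableSpace Ω] {P : Measure Ω} {E : ι → Set Ω} {q : ℝ≥0∞}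

lemma mul_measure_le_measure_iInter_compl_insert [IsFiniteMeasure P] [DecidableEq ι]
    {T : Finset ι} {j : ι}
    (hj : P (E j ∩ ⋂ k ∈ T, (E k)ᶜ) ≤ q * P (⋂ k ∈ T, (E k)ᶜ)) :
    (1 - q) * P (⋂ k ∈ T, (E k)ᶜ) ≤ P (⋂ k ∈ insert j T, (E k)ᶜ) := by
  set C := ⋂ k ∈ T, (E k)ᶜ
  rw [Finset.set_biInter_insert, ← Set.sdiff_eq_compl_inter, ← Set.sdiff_self_inter,
    Set.inter_comm]
  calc (1 - q) * P C = P C - q * P C := by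
        rw [ENNReal.sub_mul fun _ _ ↦ measure_ne_top P C, one_mul]
    _ ≤ P C - P (E j ∩ C) := tsub_le_tsub_left hj _
    _ ≤ P (C \ (E j ∩ C)) := le_measure_sdiff

lemma pow_card_mul_measure_le_measure_iInter_compl_union [IsFiniteMeasure P] [DecidableEq ι]
    (T U : Finset ι)
    (h : ∀ V ⊆ U, ∀ j ∈ U, j ∉ V →
      P (E j ∩ ⋂ k ∈ T ∪ V, (E k)ᶜ) ≤ q * P (⋂ k ∈ T ∪ V, (E k)ᶜ)) :
    (1 - q) ^ U.card * P (⋂ k ∈ T, (E k)ᶜ) ≤ P (⋂ k ∈ T ∪ U, (E k)ᶜ) := by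
  induction U using Finset.induction_on with
  | empty => simp
  | insert j U hj ih =>
    have ih := ih fun V hV k hk ↦ h V (hV.trans (subset_insert j U)) k (mem_insert_of_mem hk)
    calc (1 - q) ^ (insert j U).card * P (⋂ k ∈ T, (E k)ᶜ)
        = (1 - q) * ((1 - q) ^ U.card * P (⋂ k ∈ T, (E k)ᶜ)) := by
          rw [card_insert_of_notMem hj, pow_succ', mul_assoc]
      _ ≤ (1 - q) * P (⋂ k ∈ T ∪ U, (E k)ᶜ) := by gcongr
      _ ≤ P (⋂ k ∈ T ∪ insert j U, (E k)ᶜ) := by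
          rw [union_insert]
          exact mul_measure_le_measure_iInter_compl_insert
            (h U (subset_insert j U) j (mem_insert_self j U) hj)

variable {s : Finset ι} {Γ : ι → Finset ι} {d : ℕ}

/- `Γ i` is the neighbourhood of `i` in a dependency graph: `hind` is the one-sided independence
of `E i` from every intersection of complements of events outside `insert i (Γ i)`. -/
lemma measure_inter_iInter_compl_le [IsFiniteMeasure P] [DecidableEq ι]
    (hind : ∀ i ∈ s, ∀ T ⊆ s \ insert i (Γ i),
      P (E i ∩ ⋂ j ∈ T, (E j)ᶜ) ≤ P (E i) * P (⋂ j ∈ T, (E j)ᶜ))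
    (hΓ : ∀ i ∈ s, (Γ i).card ≤ d) (hp : ∀ i ∈ s, P (E i) ≤ q * (1 - q) ^ d) :
    ∀ S ⊆ s, ∀ i ∈ s, P (E i ∩ ⋂ j ∈ S, (E j)ᶜ) ≤ q * P (⋂ j ∈ S, (E j)ᶜ) := by
  intro S
  induction S using Finset.strongInduction with | H S ih => ?_
  intro hS i hi
  by_cases hiS : i ∈ S
  · have : E i ∩ ⋂ j ∈ S, (E j)ᶜ = ∅ :=
      Set.eq_empty_of_forall_notMem fun ω hω ↦ Set.mem_iInter₂.1 hω.2 i hiS hω.1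
    simp [this]
  set S₁ := S.filter (· ∈ Γ i)
  set S₂ := S.filter (· ∉ Γ i)
  have hS₂₁ : S₂ ∪ S₁ = S := by rw [union_comm]; exact filter_union_filter_not_eq _ S
  have hS₂ : S₂ ⊆ s \ insert i (Γ i) := fun j hj ↦ by
    obtain ⟨hjS, hjΓ⟩ := mem_filter.1 hj
    exact mem_sdiff.2 ⟨hS hjS, by rw [mem_insert]; rintro (rfl | h) <;> simp_all⟩
  have hS₁ : S₁.card ≤ d := (card_le_card fun j hj ↦ (mem_filter.1 hj).2).trans (hΓ i hi)
  have hpeel := pow_card_mul_measure_le_measure_iInter_compl_union (P := P) (E := E) (q := q)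
    S₂ S₁ fun V hV j hj hjV ↦ by
      have hsub : S₂ ∪ V ⊆ S := union_subset (filter_subset _ S) (hV.trans (filter_subset _ S))
      refine ih _ ((ssubset_iff_of_subset hsub).2 ⟨j, filter_subset _ S hj, ?_⟩)
        (hsub.trans hS) j (hS (filter_subset _ S hj))
      rw [mem_union, not_or]
      exact ⟨fun hj₂ ↦ (mem_filter.1 hj₂).2 (mem_filter.1 hj).2, hjV⟩
  calc P (E i ∩ ⋂ j ∈ S, (E j)ᶜ) ≤ P (E i ∩ ⋂ j ∈ S₂, (E j)ᶜ) := by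
        refine measure_mono (Set.inter_subset_inter_right _ ?_)
        exact Set.biInter_subset_biInter_left fun j hj ↦ filter_subset _ S hj
    _ ≤ P (E i) * P (⋂ j ∈ S₂, (E j)ᶜ) := hind i hi S₂ hS₂
    _ ≤ q * (1 - q) ^ S₁.card * P (⋂ j ∈ S₂, (E j)ᶜ) := by
        gcongr
        exact (hp i hi).trans
          (mul_le_mul_right (pow_le_pow_right_of_le_one' tsub_le_self hS₁) q)
    _ ≤ q * P (⋂ j ∈ S, (E j)ᶜ) := by
        rw [mul_assoc]
        gcongr
        rwa [← hS₂₁]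

theorem pow_card_le_measure_iInter_compl [IsProbabilityMeasure P] [DecidableEq ι]
    (hind : ∀ i ∈ s, ∀ T ⊆ s \ insert i (Γ i),
      P (E i ∩ ⋂ j ∈ T, (E j)ᶜ) ≤ P (E i) * P (⋂ j ∈ T, (E j)ᶜ))
    (hΓ : ∀ i ∈ s, (Γ i).card ≤ d) (hp : ∀ i ∈ s, P (E i) ≤ q * (1 - q) ^ d) :
    (1 - q) ^ s.card ≤ P (⋂ i ∈ s, (E i)ᶜ) := by
  simpa using pow_card_mul_measure_le_measure_iInter_compl_union (P := P) (E := E) ∅ s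
    fun V hV j hj _ ↦ measure_inter_iInter_compl_le hind hΓ hp _ (by simpa) j hj

theorem measure_iInter_compl_pos_of_exp_one_mul_le [IsProbabilityMeasure P] [DecidableEq ι]
    {p : ℝ}
    (hind : ∀ i ∈ s, ∀ T ⊆ s \ insert i (Γ i),
      P (E i ∩ ⋂ j ∈ T, (E j)ᶜ) ≤ P (E i) * P (⋂ j ∈ T, (E j)ᶜ))
    (hΓ : ∀ i ∈ s, (Γ i).card ≤ d) (hp : ∀ i ∈ s, P (E i) ≤ ENNReal.ofReal p)
    (hpd : Real.exp 1 * p * (d + 1) ≤ 1) :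
    0 < P (⋂ i ∈ s, (E i)ᶜ) := by
  set r : ℝ := (d + 2 : ℝ)⁻¹
  have hr : 0 ≤ r := by positivity
  have hr1 : r < 1 := inv_lt_one_of_one_lt₀ (by linarith [d.cast_nonneg (α := ℝ)])
  have hpr : p ≤ r * (1 - r) ^ d := by
    refine le_trans ?_ (Real.inv_exp_one_mul_le d)
    rw [← one_div, le_div_iff₀ (by positivity)]
    linarith
  refine lt_of_lt_of_le ?_ (pow_card_le_measure_iInter_compl (q := ENNReal.ofReal r) hind hΓ
    fun i hi ↦ (hp i hi).trans ?_)
  · exact ENNReal.pow_pos (tsub_pos_of_lt (ENNReal.ofReal_lt_one.2 hr1)) _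
  · rw [← ENNReal.ofReal_one, ← ENNReal.ofReal_sub _ hr, ← ENNReal.ofReal_pow (by linarith),
      ← ENNReal.ofReal_mul hr]
    exact ENNReal.ofReal_le_ofReal hpr

end LocalLemma

section ProductMeasure

variable {ι : Type*} {X : ι → Type*} [∀ i, MeasurableSpace (X i)]

lemma indep_cylinderEvents_infinitePi (μ : ∀ i, Measure (X i))
    [∀ i, IsProbabilityMeasure (μ i)] {Δ₁ Δ₂ : Set ι} (h : Disjoint Δ₁ Δ₂) :
    Indep (cylinderEvents Δ₁) (cylinderEvents Δ₂) (Measure.infinitePi μ) :=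
  indep_iSup_of_disjoint (fun i ↦ (measurable_pi_apply i).comap_le)
    (iIndepFun_infinitePi (X := fun _ ↦ id) fun _ ↦ measurable_id).iIndep h

open scoped Classical in
theorem exists_forall_notMem_cylinder_of_exp_one_mul_le (μ : ∀ i, Measure (X i))
    [∀ i, IsProbabilityMeasure (μ i)] {α : Type*} (s : Finset α) (D : α → Finset ι)
    (B : ∀ a, Set (∀ i : D a, X i)) (hB : ∀ a ∈ s, MeasurableSet (B a)) {p : ℝ} {d : ℕ}
    (hp : ∀ a ∈ s, Measure.pi (fun i : D a ↦ μ i) (B a) ≤ ENNReal.ofReal p)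
    (hd : ∀ a ∈ s, (s.filter fun b ↦ b ≠ a ∧ ((D b : Set ι) ∩ D a).Nonempty).card ≤ d)
    (hpd : Real.exp 1 * p * (d + 1) ≤ 1) :
    ∃ f : ∀ i, X i, ∀ a ∈ s, f ∉ cylinder (D a) (B a) := by
  set Γ := fun a ↦ s.filter fun b ↦ b ≠ a ∧ ((D b : Set ι) ∩ D a).Nonempty
  have hdisj : ∀ a, ∀ b ∈ s \ insert a (Γ a), ↑(D b) ⊆ (↑(D a) : Set ι)ᶜ := fun a b hb ↦ by
    obtain ⟨hbs, hba⟩ := mem_sdiff.1 hb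
    simp only [Γ, mem_insert, mem_filter, not_or] at hba
    refine Disjoint.subset_compl_right (Set.disjoint_iff_inter_eq_empty.2 ?_)
    exact Set.not_nonempty_iff_eq_empty.1 fun h ↦ hba.2 ⟨hbs, hba.1, h⟩
  have hind : ∀ a ∈ s, ∀ T ⊆ s \ insert a (Γ a),
      Measure.infinitePi μ (cylinder (D a) (B a) ∩ ⋂ b ∈ T, (cylinder (D b) (B b))ᶜ) ≤
        Measure.infinitePi μ (cylinder (D a) (B a)) *
          Measure.infinitePi μ (⋂ b ∈ T, (cylinder (D b) (B b))ᶜ) := by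
    intro a ha T hT
    refine ((Indep_iff _ _ _).1 (indep_cylinderEvents_infinitePi μ disjoint_compl_right) _ _
      (measurableSet_cylinderEvents_cylinder subset_rfl (hB a ha)) ?_).le
    exact .biInter T.countable_toSet fun b hb ↦ (measurableSet_cylinderEvents_cylinder
      (hdisj a b (hT hb)) (hB b (mem_sdiff.1 (hT hb)).1)).compl
  obtain ⟨f, hf⟩ := nonempty_of_measure_ne_zero
    (measure_iInter_compl_pos_of_exp_one_mul_le hind hd
      (fun a ha ↦ by rw [Measure.infinitePi_cylinder μ (hB a ha)]; exact hp a ha) hpd).ne'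
  exact ⟨f, fun a ha ↦ Set.mem_iInter₂.1 hf a ha⟩

end ProductMeasure

end ProbabilityTheory

/-- The Lovász Local Lemma for (possibly infinite) constraint satisfaction problems with
range a compact Polish space `Y` endowed with a Borel probability measure `μ`: if
`e · p(𝒜) · (d(𝒜) + 1) < 1`, where every constraint has violation probability at most `p`
and the domain of every constraint meets the domains of at most `d` other constraints,
then there is a coloring `f : X → Y` satisfying every constraint. -/
theorem lovasz_local_lemma_CSP {X Y : Type*} [TopologicalSpace Y] [CompactSpace Y]
    [PolishSpace Y] [MeasurableSpace Y] [BorelSpace Y]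
    (μ : Measure Y) [IsProbabilityMeasure μ]
    (𝒜 : Set (CSPConstraint X Y)) (p : ℝ) (d : ℕ)
    (hp : ∀ A ∈ 𝒜, (Measure.pi fun _ : {x // x ∈ A.dom} => μ) A.bad ≤ ENNReal.ofReal p)
    (hd : ∀ A ∈ 𝒜, Set.encard {B | B ∈ 𝒜 ∧ B ≠ A ∧ ((B.dom : Set X) ∩ (A.dom : Set X)).Nonempty}
      ≤ d)
    (hlll : Real.exp 1 * p * (d + 1) < 1) :
    ∃ f : X → Y, ∀ A ∈ 𝒜, (fun x : {x // x ∈ A.dom} => f x) ∉ A.bad := by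
  classical
  have hpp' : p < (Real.exp 1 * (d + 1))⁻¹ := by
    rw [← one_div, lt_div_iff₀ (by positivity)]
    linarith
  set p' := (Real.exp 1 * (d + 1))⁻¹
  have hopen : ∀ A ∈ 𝒜, ∃ U ⊇ A.bad, IsOpen U ∧
      (Measure.pi fun _ : {x // x ∈ A.dom} => μ) U < ENNReal.ofReal p' := fun A hA ↦
    exists_isOpen_superset_measure_pi_lt μ
      ((hp A hA).trans_lt ((ENNReal.ofReal_lt_ofReal_iff (by positivity)).2 hpp'))
  choose! U hbadU hU hμU using hopen
  have hclosed : ∀ A : 𝒜, IsClosed (cylinder A.1.dom (U A) : Set (X → Y))ᶜ := fun A ↦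
    ((hU A A.2).preimage (continuous_restrict (A := fun _ ↦ Y) _)).isClosed_compl
  have hfinite : ∀ u : Finset 𝒜,
      (⋂ A ∈ u, (cylinder A.1.dom (U A) : Set (X → Y))ᶜ).Nonempty := fun u ↦ by
    have hu : ↑(u.map (.subtype _)) ⊆ 𝒜 := by simp
    obtain ⟨f, hf⟩ := ProbabilityTheory.exists_forall_notMem_cylinder_of_exp_one_mul_le
      (fun _ ↦ μ) (u.map (.subtype _)) (·.dom) U (fun A hA ↦ (hU A (hu hA)).measurableSet)
      (fun A hA ↦ (hμU A (hu hA)).le)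
      (fun A hA ↦ Nat.cast_le.1 ((card_filter_le_encard hu _).trans (hd A (hu hA))))
      (le_of_eq (by simp only [p']; field_simp))
    exact ⟨f, Set.mem_iInter₂.2 fun A hA ↦ hf A (mem_map_of_mem _ hA)⟩
  obtain ⟨f, hf⟩ := CompactSpace.iInter_nonempty hclosed hfinite
  exact ⟨f, fun A hA hbad ↦ Set.mem_iInter.1 hf ⟨A, hA⟩ (hbadU A hA hbad)⟩
end

section
/- Let (X, d, μ) be a proper metric measure space with polynomial volume growth rate ρ^V(X) < ∞ and volume noncollapsed, i.e., inf_{x∈X} μ(B_{1/2}(x)) > 0. Then the asymptotic dimension of X satisfies asdim(X) ≤ ⌊ρ^V(X)⌋. -/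
/-!
Fix `r`, put `w = r + 2`, and enumerate a dense sequence of centres. Greedily cut a set `Y` into
cells: the `k`-th cell is what is left of `Y` inside a ball of radius `3jw` (`1 ≤ j ≤ M`) around
the `k`-th centre, where `j` is chosen so that the `1`-thickening of the annulus of width `2w`
around that sphere has at most an `ε`-fraction of the mass of the `1`-thickened core of radius
`(3j - 2)w`. Such a `j` exists: otherwise the thickened cores grow by the factor `1 + ε` at each of
the `M` steps, which the volume of a ball of radius `3w(M + 1)` forbids once `(1 + ε)^M` beats it.
The points of a cell at distance `> r` from the other cells form an `r`-separated family of sets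
of diameter `≤ 6wM`; every other point lies in a chosen annulus, so the leftover has, in each ball,
at most `ε` times the mass of `Y` in a ball `6wM` larger.

Doing `n + 1 = ⌊ρ⌋ + 1` rounds, starting from `X`, leaves mass at most `ε^(n+1) V(O(M))` in each
ball. With `V(T) ≤ C (T + 1)^s` for some `ρ < s < n + 1` and `ε = M^(-γ)`, `s/(n+1) < γ < 1`, this
is `O(M^(s - γ(n+1))) → 0`, while `(1 + ε)^M ≥ exp(M^(1-γ)/2)` outgrows `V(O(M))`. For large `M`
the final leftover is thus lighter than a ball of radius `1/2`, hence empty.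
-/

open Metric MeasureTheory Filter Set Function
open scoped ENNReal

namespace PolyGrowthAsdim

variable {X : Type*} [PseudoMetricSpace X]

theorem disjoint_thickening_of_le_dist {s t : Set X} {δ : ℝ}
    (h : ∀ x ∈ s, ∀ y ∈ t, 2 * δ ≤ dist x y) :
    Disjoint (thickening δ s) (thickening δ t) := by
  refine Set.disjoint_left.mpr fun u hus hut => ?_
  obtain ⟨x, hx, hux⟩ := mem_thickening_iff.mp hus
  obtain ⟨y, hy, huy⟩ := mem_thickening_iff.mp hut
  have := dist_triangle_left x y u
  linarith [h x hx y hy]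

def innerPart (Y C : Set X) (r : ℝ) : Set X := {x ∈ C | ∀ y ∈ Y, dist x y ≤ r → y ∈ C}

theorem lt_dist_of_mem_innerPart {Y C C' : Set X} {r : ℝ} {a b : X} (hCC' : Disjoint C C')
    (ha : a ∈ innerPart Y C r) (hb : b ∈ C') (hbY : b ∈ Y) : r < dist a b :=
  not_le.mp fun hab => Set.disjoint_left.mp hCC' (ha.2 b hbY hab) hb

section Greedy

variable (d : ℕ → X) (t : Set X → X → ℝ) (Y : Set X)

def greedyRest : ℕ → Set X
  | 0 => Y
  | k + 1 => greedyRest k \ ball (d k) (t (greedyRest k) (d k))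

def greedyRadius (k : ℕ) : ℝ := t (greedyRest d t Y k) (d k)

def greedyCell (k : ℕ) : Set X := greedyRest d t Y k ∩ ball (d k) (greedyRadius d t Y k)

variable {d t Y}

theorem greedyRest_succ (k : ℕ) :
    greedyRest d t Y (k + 1) = greedyRest d t Y k \ greedyCell d t Y k := by
  rw [greedyCell, sdiff_self_inter]
  rfl

theorem greedyRest_antitone : Antitone (greedyRest d t Y) :=
  antitone_nat_of_succ_le fun _ => sdiff_subset

theorem greedyRest_subset (k : ℕ) : greedyRest d t Y k ⊆ Y :=
  greedyRest_antitone (Nat.zero_le k)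

theorem greedyCell_subset_greedyRest (k : ℕ) : greedyCell d t Y k ⊆ greedyRest d t Y k :=
  inter_subset_left

theorem dist_lt_of_mem_greedyCell {x : X} {k : ℕ} (hx : x ∈ greedyCell d t Y k) :
    dist x (d k) < greedyRadius d t Y k :=
  mem_ball.mp hx.2

theorem greedyRadius_le_dist {x : X} {k l : ℕ} (hx : x ∈ greedyRest d t Y l) (hkl : k < l) :
    greedyRadius d t Y k ≤ dist x (d k) :=
  not_lt.mp fun h => (greedyRest_antitone hkl hx).2 (mem_ball.mpr h)

theorem eq_of_mem_greedyCell {x : X} {k l : ℕ} (hk : x ∈ greedyCell d t Y k)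
    (hl : x ∈ greedyCell d t Y l) : k = l := by
  by_contra hkl
  rcases Nat.lt_or_gt_of_ne hkl with h | h
  · exact (greedyRadius_le_dist (greedyCell_subset_greedyRest l hl) h).not_gt
      (dist_lt_of_mem_greedyCell hk)
  · exact (greedyRadius_le_dist (greedyCell_subset_greedyRest k hk) h).not_gt
      (dist_lt_of_mem_greedyCell hl)

theorem mem_greedyRest_of_notMem_greedyCell {x : X} (hx : x ∈ Y)
    (hC : ∀ k, x ∉ greedyCell d t Y k) (k : ℕ) : x ∈ greedyRest d t Y k := by
  induction k with
  | zero => exact hx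
  | succ k ih => exact greedyRest_succ (d := d) k ▸ ⟨ih, hC k⟩

theorem subset_iUnion_greedyCell (hd : DenseRange d) {δ : ℝ} (hδ : 0 < δ)
    (ht : ∀ k, ∀ x ∈ greedyRest d t Y k, dist x (d k) < δ → δ ≤ greedyRadius d t Y k) :
    Y ⊆ ⋃ k, greedyCell d t Y k := by
  intro x hx
  by_contra hxC
  simp only [mem_iUnion, not_exists] at hxC
  obtain ⟨k, hk⟩ := hd.exists_dist_lt x hδ
  have hxk := mem_greedyRest_of_notMem_greedyCell hx hxC k
  exact hxC k ⟨hxk, mem_ball.mpr (hk.trans_le (ht k x hxk hk))⟩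

theorem disjoint_greedyCell {k l : ℕ} (hkl : k ≠ l) :
    Disjoint (greedyCell d t Y k) (greedyCell d t Y l) :=
  Set.disjoint_left.mpr fun _ hk hl => hkl (eq_of_mem_greedyCell hk hl)

theorem exists_near_greedyRadius {r : ℝ} (hcov : Y ⊆ ⋃ k, greedyCell d t Y k) {x : X}
    (hx : x ∈ Y) (hxP : ∀ k, x ∉ innerPart Y (greedyCell d t Y k) r) :
    ∃ k, (greedyCell d t Y k).Nonempty ∧ x ∈ greedyRest d t Y k ∧
      greedyRadius d t Y k - r ≤ dist x (d k) ∧ dist x (d k) < greedyRadius d t Y k + r := by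
  obtain ⟨k, hxk⟩ := mem_iUnion.mp (hcov hx)
  obtain ⟨y, hyY, hxy, hyk⟩ : ∃ y ∈ Y, dist x y ≤ r ∧ y ∉ greedyCell d t Y k := by
    by_contra! h
    exact hxP k ⟨hxk, h⟩
  obtain ⟨l, hyl⟩ := mem_iUnion.mp (hcov hyY)
  have hlk : l ≠ k := fun h => hyk (h ▸ hyl)
  rcases Nat.lt_or_gt_of_ne hlk with h | h
  · have hxl := greedyRadius_le_dist (greedyCell_subset_greedyRest k hxk) h
    have := dist_lt_of_mem_greedyCell hyl
    have := dist_triangle x y (d l)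
    exact ⟨l, ⟨y, hyl⟩, greedyRest_antitone h.le (greedyCell_subset_greedyRest k hxk),
      by linarith [dist_nonneg (x := x) (y := y)], by linarith⟩
  · have hyk' := greedyRadius_le_dist (greedyCell_subset_greedyRest l hyl) h
    have := dist_lt_of_mem_greedyCell hxk
    have := dist_triangle_left y (d k) x
    exact ⟨k, ⟨x, hxk⟩, greedyCell_subset_greedyRest k hxk, by linarith,
      by linarith [dist_nonneg (x := x) (y := y)]⟩

end Greedy

theorem one_add_pow_mul_le_of_forall_mul_le {g a : ℕ → ℝ≥0∞} {ε : ℝ≥0∞} {M : ℕ}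
    (hstep : ∀ j, g j + a j ≤ g (j + 1)) (hinc : ∀ j, 1 ≤ j → j ≤ M → ε * g j ≤ a j) :
    (1 + ε) ^ M * g 1 ≤ g (M + 1) := by
  induction M with
  | zero => simp
  | succ M ih =>
    calc (1 + ε) ^ (M + 1) * g 1 = (1 + ε) * ((1 + ε) ^ M * g 1) := by ring
      _ ≤ (1 + ε) * g (M + 1) := by
        gcongr
        exact ih fun j h1 h2 => hinc j h1 (by omega)
      _ = g (M + 1) + ε * g (M + 1) := by ring
      _ ≤ g (M + 1) + a (M + 1) := by gcongr; exact hinc _ (by omega) le_rfl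
      _ ≤ g (M + 1 + 1) := hstep _

def annulus (Y : Set X) (c : X) (w : ℝ) (j : ℕ) : Set X :=
  Y ∩ (ball c ((3 * j + 1) * w) \ ball c ((3 * j - 1) * w))

def core (Y : Set X) (c : X) (w : ℝ) (j : ℕ) : Set X := Y ∩ ball c ((3 * j - 2) * w)

theorem disjoint_thickening_core_annulus {Y : Set X} {c : X} {w : ℝ} (hw : 2 ≤ w) (j : ℕ) :
    Disjoint (thickening 1 (core Y c w j)) (thickening 1 (annulus Y c w j)) := by
  refine disjoint_thickening_of_le_dist fun x hx y hy => ?_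
  have hxc := mem_ball.mp hx.2
  have hyc := not_lt.mp (mt mem_ball.mpr hy.2.2)
  have := dist_triangle_left y c x
  nlinarith

theorem core_union_annulus_subset (Y : Set X) (c : X) {w : ℝ} (hw : 0 ≤ w) (j : ℕ) :
    core Y c w j ∪ annulus Y c w j ⊆ core Y c w (j + 1) := by
  refine union_subset (inter_subset_inter_right _ (ball_subset_ball ?_))
    (inter_subset_inter_right _ (sdiff_subset.trans (ball_subset_ball ?_))) <;>
  · push_cast; nlinarith

variable [MeasurableSpace X]

def IsThinIndex (μ : Measure X) (ε : ℝ≥0∞) (w : ℝ) (M : ℕ) (Y : Set X) (c : X) (j : ℕ) :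
    Prop :=
  1 ≤ j ∧ j ≤ M ∧ μ (thickening 1 (annulus Y c w j)) ≤ ε * μ (thickening 1 (core Y c w j))

theorem exists_isThinIndex [OpensMeasurableSpace X] {μ : Measure X} {m ε : ℝ≥0∞} {w : ℝ}
    {M : ℕ} (hm : ∀ x, m ≤ μ (ball x (1 / 2))) (hw : 2 ≤ w) {Y : Set X} {c : X}
    (hgrowth : μ (ball c (3 * w * (M + 1))) < (1 + ε) ^ M * m) (hY : (Y ∩ ball c 1).Nonempty) :
    ∃ j, IsThinIndex μ ε w M Y c j := by
  by_contra hthin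
  set g := fun j => μ (thickening 1 (core Y c w j))
  have hstep (j : ℕ) : g j + μ (thickening 1 (annulus Y c w j)) ≤ g (j + 1) := by
    rw [← measure_union (disjoint_thickening_core_annulus hw j)
      isOpen_thickening.measurableSet, ← thickening_union]
    exact measure_mono
      (thickening_subset_of_subset 1 (core_union_annulus_subset Y c (by linarith) j))
  have hgrow := one_add_pow_mul_le_of_forall_mul_le hstep fun j h1 h2 =>
    le_of_not_ge fun h => hthin ⟨j, h1, h2, h⟩
  obtain ⟨p, hpY, hpc⟩ := hY
  have hg1 : m ≤ g 1 := by
    refine (hm p).trans (measure_mono ((ball_subset_ball (by norm_num)).trans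
      (ball_subset_thickening (show p ∈ core Y c w 1 from ⟨hpY, ?_⟩) 1)))
    rw [mem_ball] at hpc ⊢
    push_cast
    linarith
  have hgM : g (M + 1) ≤ μ (ball c (3 * w * (M + 1))) := by
    refine measure_mono ((thickening_subset_of_subset 1 inter_subset_right).trans
      ((thickening_ball c 1 _).trans (ball_subset_ball ?_)))
    push_cast
    linarith
  have : (1 + ε) ^ M * m ≤ (1 + ε) ^ M * g 1 := by gcongr
  exact (hgrowth.trans_le (this.trans (hgrow.trans hgM))).false

open Classical in
/-- `0`, which makes the cell of radius `3 * w * thinIndex …` empty, if no index is thin. -/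
noncomputable def thinIndex (μ : Measure X) (ε : ℝ≥0∞) (w : ℝ) (M : ℕ) (Y : Set X) (c : X) :
    ℕ :=
  if h : ∃ j, IsThinIndex μ ε w M Y c j then h.choose else 0

section ThinIndex

variable {μ : Measure X} {ε : ℝ≥0∞} {w : ℝ} {M : ℕ} {Y : Set X} {c : X}

theorem isThinIndex_thinIndex (h : ∃ j, IsThinIndex μ ε w M Y c j) :
    IsThinIndex μ ε w M Y c (thinIndex μ ε w M Y c) := by
  rw [thinIndex, dif_pos h]
  exact h.choose_spec

theorem thinIndex_ne_zero_iff : thinIndex μ ε w M Y c ≠ 0 ↔ ∃ j, IsThinIndex μ ε w M Y c j := by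
  refine ⟨fun h => ?_, fun h => Nat.one_le_iff_ne_zero.mp (isThinIndex_thinIndex h).1⟩
  by_contra hj
  exact h (by rw [thinIndex, dif_neg hj])

theorem thinIndex_le : thinIndex μ ε w M Y c ≤ M := by
  by_cases h : ∃ j, IsThinIndex μ ε w M Y c j
  · exact (isThinIndex_thinIndex h).2.1
  · rw [thinIndex, dif_neg h]
    exact Nat.zero_le M

end ThinIndex

noncomputable def thinRadius (μ : Measure X) (ε : ℝ≥0∞) (w : ℝ) (M : ℕ) (Y : Set X) (c : X) :
    ℝ :=
  3 * w * thinIndex μ ε w M Y c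

section Round

variable {μ : Measure X} {m ε : ℝ≥0∞} {w : ℝ} {M : ℕ} {d : ℕ → X} {Y : Set X}

local notation "rest" => greedyRest d (thinRadius μ ε w M) Y
local notation "cell" => greedyCell d (thinRadius μ ε w M) Y
local notation "idx" k => thinIndex μ ε w M (rest k) (d k)

theorem subset_iUnion_greedyCell_thinRadius [OpensMeasurableSpace X]
    (hm : ∀ x, m ≤ μ (ball x (1 / 2))) (hw : 2 ≤ w)
    (hgrowth : ∀ x, μ (ball x (3 * w * (M + 1))) < (1 + ε) ^ M * m) (hd : DenseRange d) :
    Y ⊆ ⋃ k, cell k := by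
  refine subset_iUnion_greedyCell hd one_pos fun k x hx hxk => ?_
  have hj := (isThinIndex_thinIndex
    (exists_isThinIndex hm hw (hgrowth (d k)) ⟨x, hx, mem_ball.mpr hxk⟩)).1
  have : (1 : ℝ) ≤ (idx k) := by exact_mod_cast hj
  change 1 ≤ 3 * w * (idx k)
  nlinarith

theorem exists_mem_annulus {r : ℝ} (hrw : r < w) (hcov : Y ⊆ ⋃ k, cell k) {x : X} (hx : x ∈ Y)
    (hxP : ∀ k, x ∉ innerPart Y (cell k) r) :
    ∃ k, IsThinIndex μ ε w M (rest k) (d k) (idx k) ∧ x ∈ annulus (rest k) (d k) w (idx k) := by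
  obtain ⟨k, ⟨y, hy⟩, hxk, hlo, hhi⟩ := exists_near_greedyRadius hcov hx hxP
  have hrad : greedyRadius d (thinRadius μ ε w M) Y k = 3 * w * (idx k) := rfl
  have hj : (idx k) ≠ 0 := by
    intro h
    have := dist_lt_of_mem_greedyCell hy
    rw [hrad, h, Nat.cast_zero, mul_zero] at this
    exact (dist_nonneg.trans_lt this).false
  refine ⟨k, isThinIndex_thinIndex (thinIndex_ne_zero_iff.mp hj), hxk, mem_ball.mpr ?_,
    fun h => ?_⟩
  · rw [hrad] at hhi
    linarith
  · rw [mem_ball] at h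
    rw [hrad] at hlo
    linarith

theorem pairwise_disjoint_thickening_core (hw : 1 ≤ w) :
    Pairwise (Disjoint on (fun k => thickening 1 (core (rest k) (d k) w (idx k)))) := by
  have key {k l : ℕ} (hkl : k < l) :
      Disjoint (thickening 1 (core (rest k) (d k) w (idx k)))
        (thickening 1 (core (rest l) (d l) w (idx l))) := by
    refine disjoint_thickening_of_le_dist fun x hx y hy => ?_
    have hyk := greedyRadius_le_dist hy.1 hkl
    have hxk := mem_ball.mp hx.2
    have := dist_triangle_left y (d k) x
    change 3 * w * (idx k) ≤ _ at hyk
    nlinarith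
  intro k l hkl
  rcases Nat.lt_or_gt_of_ne hkl with h | h
  exacts [key h, (key h).symm]

theorem dist_le_of_mem_greedyCell_thinRadius (hw : 0 ≤ w) {k : ℕ} {a b : X} (ha : a ∈ cell k)
    (hb : b ∈ cell k) : dist a b ≤ 6 * w * M := by
  have hj : ((idx k) : ℝ) ≤ M := by exact_mod_cast thinIndex_le
  have := dist_lt_of_mem_greedyCell ha
  have := dist_lt_of_mem_greedyCell hb
  have := dist_triangle_right a b (d k)
  change _ < 3 * w * (idx k) at *
  nlinarith

theorem measure_thickening_sdiff_inter_ball_le [OpensMeasurableSpace X] {r : ℝ} (hw : 2 ≤ w)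
    (hrw : r < w) (hcov : Y ⊆ ⋃ k, cell k) (z : X) (T : ℝ) :
    μ (thickening 1 ((Y \ ⋃ k, innerPart Y (cell k) r) ∩ ball z T)) ≤
      ε * μ (thickening 1 (Y ∩ ball z (T + 6 * w * M))) := by
  set A := fun k => annulus (rest k) (d k) w (idx k)
  set S := {k | IsThinIndex μ ε w M (rest k) (d k) (idx k) ∧ (A k ∩ ball z T).Nonempty}
  have hA : thickening 1 ((Y \ ⋃ k, innerPart Y (cell k) r) ∩ ball z T) ⊆
      ⋃ k ∈ S, thickening 1 (A k) := by
    simp only [← thickening_iUnion]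
    refine thickening_subset_of_subset 1 fun x ⟨⟨hxY, hxP⟩, hxz⟩ => ?_
    obtain ⟨k, hthin, hxA⟩ :=
      exists_mem_annulus hrw hcov hxY fun k h => hxP (mem_iUnion_of_mem k h)
    exact mem_biUnion ⟨hthin, x, hxA, hxz⟩ hxA
  have hcore : ⋃ k ∈ S, thickening 1 (core (rest k) (d k) w (idx k)) ⊆
      thickening 1 (Y ∩ ball z (T + 6 * w * M)) := by
    refine iUnion₂_subset fun k ⟨hthin, q, hqA, hqz⟩ => thickening_subset_of_subset 1
      fun x hx => ⟨greedyRest_subset k hx.1, mem_ball.mpr ?_⟩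
    have hjM : ((idx k) : ℝ) ≤ M := by exact_mod_cast hthin.2.1
    have hxk := mem_ball.mp hx.2
    have hqk := mem_ball.mp hqA.2.1
    have := dist_triangle4 x (d k) q z
    rw [dist_comm (d k)] at this
    nlinarith [mem_ball.mp hqz]
  calc _ ≤ μ (⋃ k ∈ S, thickening 1 (A k)) := measure_mono hA
    _ ≤ ∑' k : S, μ (thickening 1 (A k)) := measure_biUnion_le μ S.to_countable _
    _ ≤ ∑' k : S, ε * μ (thickening 1 (core (rest k) (d k) w (idx k))) :=
      ENNReal.tsum_le_tsum fun k => k.2.1.2.2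
    _ = ε * μ (⋃ k ∈ S, thickening 1 (core (rest k) (d k) w (idx k))) := by
      rw [ENNReal.tsum_mul_left, measure_biUnion S.to_countable
        ((pairwise_disjoint_thickening_core (by linarith)).set_pairwise S)
        fun _ _ => isOpen_thickening.measurableSet]
    _ ≤ _ := by gcongr

end Round

theorem exists_separated_families_and_thin_leftover [OpensMeasurableSpace X] {μ : Measure X}
    {m ε : ℝ≥0∞} {w r : ℝ} {M : ℕ} {d : ℕ → X} (hm : ∀ x, m ≤ μ (ball x (1 / 2)))
    (hd : DenseRange d) (hrw : r < w) (hw : 2 ≤ w)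
    (hgrowth : ∀ x, μ (ball x (3 * w * (M + 1))) < (1 + ε) ^ M * m) (Y : Set X) :
    ∃ (Z : Set X) (P : ℕ → Set X), Y ⊆ Z ∪ ⋃ k, P k ∧
      (∀ k l, k ≠ l → ∀ a ∈ P k, ∀ b ∈ P l, r < dist a b) ∧
      (∀ k, ∀ a ∈ P k, ∀ b ∈ P k, dist a b ≤ 6 * w * M) ∧
      ∀ z T, μ (thickening 1 (Z ∩ ball z T)) ≤
        ε * μ (thickening 1 (Y ∩ ball z (T + 6 * w * M))) := by
  have hcov := subset_iUnion_greedyCell_thinRadius (Y := Y) hm hw hgrowth hd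
  refine ⟨_, fun k => innerPart Y (greedyCell d (thinRadius μ ε w M) Y k) r,
    subset_sdiff_union _ _, fun k l hkl a ha b hb => ?_, fun k a ha b hb => ?_,
    measure_thickening_sdiff_inter_ball_le hw hrw hcov⟩
  · exact lt_dist_of_mem_innerPart (disjoint_greedyCell hkl) ha hb.1
      (greedyRest_subset l (greedyCell_subset_greedyRest l hb.1))
  · exact dist_le_of_mem_greedyCell_thinRadius (by linarith) ha.1 hb.1

theorem subset_iterate_union {α : Type*} {Φ : Set α → Set α} {P : Set α → ℕ → Set α}
    (h : ∀ Y, Y ⊆ Φ Y ∪ ⋃ k, P Y k) (s : Set α) (i : ℕ) :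
    s ⊆ Φ^[i] s ∪ ⋃ j < i, ⋃ k, P (Φ^[j] s) k := by
  induction i with
  | zero => exact subset_union_left
  | succ i ih =>
    refine ih.trans (union_subset ((h _).trans ?_) (subset_union_of_subset_right ?_ _))
    · rw [Function.iterate_succ_apply']
      exact union_subset_union_right _ (subset_iUnion₂_of_subset i (Nat.lt_succ_self i) le_rfl)
    · exact iUnion₂_subset fun j hj => subset_iUnion₂_of_subset j (Nat.lt_succ_of_lt hj) le_rfl

theorem measure_thickening_iterate_inter_ball_le {μ : Measure X} {ε : ℝ≥0∞} {L : ℝ}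
    {Φ : Set X → Set X}
    (h : ∀ Y z T, μ (thickening 1 (Φ Y ∩ ball z T)) ≤ ε * μ (thickening 1 (Y ∩ ball z (T + L))))
    (i : ℕ) (z : X) (T : ℝ) :
    μ (thickening 1 (Φ^[i] univ ∩ ball z T)) ≤ ε ^ i * μ (thickening 1 (ball z (T + i * L))) := by
  induction i generalizing T with
  | zero => simp
  | succ i ih =>
    rw [Function.iterate_succ_apply']
    calc _ ≤ ε * μ (thickening 1 (Φ^[i] univ ∩ ball z (T + L))) := h _ z T
      _ ≤ ε * (ε ^ i * μ (thickening 1 (ball z (T + L + i * L)))) := by gcongr; exact ih _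
      _ = _ := by rw [pow_succ', mul_assoc]; push_cast; ring_nf

theorem exists_separated_bounded_cover [OpensMeasurableSpace X] [TopologicalSpace.SeparableSpace X]
    {μ : Measure X} {m ε : ℝ≥0∞} {w r : ℝ} {M n : ℕ} (hm : ∀ x, m ≤ μ (ball x (1 / 2)))
    (hrw : r < w) (hw : 2 ≤ w) (hgrowth : ∀ x, μ (ball x (3 * w * (M + 1))) < (1 + ε) ^ M * m)
    (hsmall : ∀ x, ε ^ (n + 1) * μ (ball x ((n + 1) * (6 * w * M) + 2)) < m) :
    ∃ (D : ℝ) (U : Fin (n + 1) → Set (Set X)),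
      (∀ i, ∀ A ∈ U i, ∀ B ∈ U i, A ≠ B → ∀ a ∈ A, ∀ b ∈ B, r < dist a b) ∧
      (∀ i, ∀ A ∈ U i, ∀ a ∈ A, ∀ b ∈ A, dist a b ≤ D) ∧
      (∀ x : X, ∃ i, ∃ A ∈ U i, x ∈ A) := by
  rcases isEmpty_or_nonempty X with hX | hX
  · exact ⟨0, fun _ => ∅, by simp, by simp, isEmptyElim⟩
  obtain ⟨d, hd⟩ := TopologicalSpace.exists_dense_seq X
  choose Φ P hcov hsep hbdd hmass using
    exists_separated_families_and_thin_leftover hm hd hrw hw hgrowth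
  have hempty : Φ^[n + 1] univ = ∅ := by
    refine eq_empty_of_forall_notMem fun x hx => (hsmall x).not_ge ?_
    calc m ≤ μ (ball x (1 / 2)) := hm x
      _ ≤ μ (thickening 1 (Φ^[n + 1] univ ∩ ball x 1)) :=
        measure_mono ((ball_subset_ball (by norm_num)).trans
          (ball_subset_thickening (mem_inter hx (mem_ball_self one_pos)) 1))
      _ ≤ ε ^ (n + 1) * μ (thickening 1 (ball x (1 + (n + 1 : ℕ) * (6 * w * M)))) :=
        measure_thickening_iterate_inter_ball_le hmass _ x 1
      _ ≤ ε ^ (n + 1) * μ (ball x ((n + 1) * (6 * w * M) + 2)) := by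
        gcongr
        refine (thickening_ball x 1 _).trans (ball_subset_ball (le_of_eq ?_))
        push_cast
        ring
  refine ⟨6 * w * M, fun i => range (P (Φ^[i] univ)), ?_, ?_, fun x => ?_⟩
  · rintro i _ ⟨k, rfl⟩ _ ⟨l, rfl⟩ hkl
    exact hsep _ k l fun h => hkl (h ▸ rfl)
  · rintro i _ ⟨k, rfl⟩
    exact hbdd _ k
  · have hx := subset_iterate_union hcov univ (n + 1) (mem_univ x)
    simp only [hempty, empty_union, mem_iUnion] at hx
    obtain ⟨j, hj, k, hk⟩ := hx
    exact ⟨⟨j, hj⟩, _, mem_range_self k, hk⟩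

theorem exists_le_mul_rpow_of_limsup_lt {f : ℝ → ℝ≥0∞} (hf : Monotone f) (hfin : ∀ T, f T ≠ ⊤)
    {s : ℝ} (hs : 0 ≤ s)
    (hbdd : IsBoundedUnder (· ≤ ·) atTop fun T => Real.log (f T).toReal / Real.log (T + 1))
    (hlt : limsup (fun T => Real.log (f T).toReal / Real.log (T + 1)) atTop < s) :
    ∃ C, 0 ≤ C ∧ ∀ T, 0 ≤ T → f T ≤ ENNReal.ofReal (C * (T + 1) ^ s) := by
  obtain ⟨T₀, hT₀⟩ := eventually_atTop.mp (eventually_lt_of_limsup_lt hlt hbdd)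
  set T₁ := max T₀ 1
  refine ⟨(f T₁).toReal + 1, by positivity, fun T hT => ?_⟩
  rw [← ENNReal.ofReal_toReal (hfin T)]
  refine ENNReal.ofReal_le_ofReal ?_
  have h1 : 1 ≤ (T + 1) ^ s := Real.one_le_rpow (by linarith) hs
  rcases le_or_gt T T₁ with h | h
  · have := ENNReal.toReal_mono (hfin T₁) (hf h)
    nlinarith [ENNReal.toReal_nonneg (a := f T₁)]
  · have hlog : 0 < Real.log (T + 1) := Real.log_pos (by linarith [le_max_right T₀ 1])
    have hratio := hT₀ T ((le_max_left T₀ 1).trans h.le)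
    have : (f T).toReal ≤ (T + 1) ^ s :=
      Real.le_rpow_of_log_le (by linarith) ((div_lt_iff₀ hlog).mp hratio).le
    nlinarith [ENNReal.toReal_nonneg (a := f T₁)]

theorem eventually_mul_rpow_lt_exp (K s : ℝ) {β : ℝ} (hβ : 0 < β) :
    ∀ᶠ x : ℝ in atTop, K * x ^ s < Real.exp (x ^ β / 2) := by
  have hlim := ((tendsto_rpow_mul_exp_neg_mul_atTop_nhds_zero (s / β) (1 / 2) one_half_pos).comp
    (tendsto_rpow_atTop hβ)).const_mul K
  rw [mul_zero] at hlim
  filter_upwards [hlim.eventually_lt_const one_pos, eventually_gt_atTop 0] with x hx hx0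
  rw [Function.comp_apply, ← Real.rpow_mul hx0.le, mul_div_cancel₀ s hβ.ne', ← mul_assoc,
    ← lt_div_iff₀ (Real.exp_pos _), one_div, ← Real.exp_neg] at hx
  refine hx.trans_eq (congrArg Real.exp ?_)
  ring

theorem eventually_mul_rpow_lt_one_add_rpow_neg_pow (K s : ℝ) {γ : ℝ} (hγ0 : 0 ≤ γ)
    (hγ1 : γ < 1) : ∀ᶠ M : ℕ in atTop, K * (M : ℝ) ^ s < (1 + (M : ℝ) ^ (-γ)) ^ M := by
  filter_upwards [tendsto_natCast_atTop_atTop.eventually (eventually_mul_rpow_lt_exp K s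
    (sub_pos.mpr hγ1)), eventually_ge_atTop 1] with M hM hM1
  have hM0 : (0 : ℝ) < M := by exact_mod_cast hM1
  obtain ⟨e, he_def⟩ : ∃ e, e = (M : ℝ) ^ (-γ) := ⟨_, rfl⟩
  rw [← he_def]
  have he : 0 ≤ e := he_def ▸ by positivity
  have he1 : e ≤ 1 :=
    he_def ▸ Real.rpow_le_one_of_one_le_of_nonpos (by exact_mod_cast hM1) (by linarith)
  have hlog : e / 2 ≤ Real.log (1 + e) := by
    refine le_trans ?_ (Real.le_log_one_add_of_nonneg he)
    rw [div_le_div_iff₀ two_pos (by linarith)]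
    nlinarith
  calc K * (M : ℝ) ^ s < Real.exp ((M : ℝ) ^ (1 - γ) / 2) := hM
    _ = Real.exp (M * (e / 2)) := by
      rw [sub_eq_add_neg, Real.rpow_add hM0, Real.rpow_one, he_def, mul_div_assoc]
    _ ≤ Real.exp (M * Real.log (1 + e)) := by gcongr
    _ = (1 + e) ^ M := by rw [Real.exp_nat_mul, Real.exp_log (by linarith)]

theorem eventually_rpow_neg_pow_mul_lt_one (K s : ℝ) {γ : ℝ} {n : ℕ} (hs : s < γ * (n + 1)) :
    ∀ᶠ M : ℕ in atTop, ((M : ℝ) ^ (-γ)) ^ (n + 1) * (K * (M : ℝ) ^ s) < 1 := by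
  have hlim := ((tendsto_rpow_neg_atTop (sub_pos.mpr hs)).const_mul K).comp
    tendsto_natCast_atTop_atTop
  rw [mul_zero] at hlim
  filter_upwards [hlim.eventually_lt_const one_pos, eventually_gt_atTop 0] with M hM hM0
  have hM0 : (0 : ℝ) < M := by exact_mod_cast hM0
  refine lt_of_eq_of_lt ?_ hM
  rw [Function.comp_apply, ← Real.rpow_natCast, ← Real.rpow_mul hM0.le, mul_left_comm,
    ← Real.rpow_add hM0]
  push_cast
  ring_nf

theorem exists_nat_mul_rpow_lt_one_add_pow (K : ℝ) {s : ℝ} {n : ℕ} (hs0 : 0 ≤ s)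
    (hs : s < n + 1) :
    ∃ M : ℕ, 1 ≤ M ∧ ∃ e : ℝ, 0 ≤ e ∧ K * (M : ℝ) ^ s < (1 + e) ^ M ∧
      e ^ (n + 1) * (K * (M : ℝ) ^ s) < 1 := by
  obtain ⟨γ, hγ0, hγ1, hγs⟩ : ∃ γ : ℝ, 0 ≤ γ ∧ γ < 1 ∧ s < γ * (n + 1) := by
    have hq : s / (n + 1) < 1 := (div_lt_one (by positivity)).mpr hs
    refine ⟨(s / (n + 1) + 1) / 2, by positivity, by linarith, ?_⟩
    calc s = s / (n + 1) * (n + 1) := (div_mul_cancel₀ s (by positivity)).symm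
      _ < _ := mul_lt_mul_of_pos_right (by linarith) (by positivity)
  obtain ⟨M, hM1, hgrow, hsmall⟩ := ((eventually_ge_atTop 1).and
    ((eventually_mul_rpow_lt_one_add_rpow_neg_pow K s hγ0 hγ1).and
      (eventually_rpow_neg_pow_mul_lt_one K s hγs))).exists
  exact ⟨M, hM1, _, by positivity, hgrow, hsmall⟩

theorem exists_scale_of_measure_ball_le_rpow {μ : Measure X} {v C s w : ℝ} {n : ℕ} (hv : 0 < v)
    (hC : 0 ≤ C) (hs0 : 0 ≤ s) (hs : s < n + 1) (hw : 0 < w)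
    (hV : ∀ x T, 0 ≤ T → μ (ball x T) ≤ ENNReal.ofReal (C * (T + 1) ^ s)) :
    ∃ (M : ℕ) (ε : ℝ≥0∞),
      (∀ x, μ (ball x (3 * w * (M + 1))) < (1 + ε) ^ M * ENNReal.ofReal v) ∧
      ∀ x, ε ^ (n + 1) * μ (ball x ((n + 1) * (6 * w * M) + 2)) < ENNReal.ofReal v := by
  set L := 6 * w * (n + 2) + 3
  obtain ⟨M, hM1, e, he, hgrow, hsmall⟩ := exists_nat_mul_rpow_lt_one_add_pow (C * L ^ s / v) hs0 hs
  set B := C * L ^ s / v * (M : ℝ) ^ s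
  have hM1' : (1 : ℝ) ≤ M := by exact_mod_cast hM1
  have hwM : w ≤ w * M := le_mul_of_one_le_right hw.le hM1'
  have hnwM : 0 ≤ n * (w * M) := by positivity
  have hball (x : X) (T : ℝ) (hT : 0 ≤ T) (hTM : T + 1 ≤ L * M) :
      μ (ball x T) ≤ ENNReal.ofReal (B * v) := by
    refine (hV x T hT).trans (ENNReal.ofReal_le_ofReal ?_)
    calc C * (T + 1) ^ s ≤ C * (L * M) ^ s := by gcongr
      _ = B * v := by
        rw [Real.mul_rpow (by positivity) (by positivity)]
        simp only [B]
        field_simp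
  refine ⟨M, ENNReal.ofReal e, fun x => ?_, fun x => ?_⟩
  · calc μ (ball x (3 * w * (M + 1))) ≤ ENNReal.ofReal (B * v) :=
          hball x _ (by positivity) (by simp only [L]; nlinarith)
      _ < ENNReal.ofReal ((1 + e) ^ M * v) :=
          (ENNReal.ofReal_lt_ofReal_iff (by positivity)).mpr (mul_lt_mul_of_pos_right hgrow hv)
      _ = _ := by
        rw [ENNReal.ofReal_mul (by positivity), ENNReal.ofReal_pow (by positivity),
          ENNReal.ofReal_add zero_le_one he, ENNReal.ofReal_one]
  · calc _ ≤ ENNReal.ofReal e ^ (n + 1) * ENNReal.ofReal (B * v) := by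
          gcongr
          exact hball x _ (by positivity) (by simp only [L]; nlinarith)
      _ = ENNReal.ofReal (e ^ (n + 1) * B * v) := by
        rw [← ENNReal.ofReal_pow he, ← ENNReal.ofReal_mul (by positivity)]
        congr 1
        ring
      _ < ENNReal.ofReal v := (ENNReal.ofReal_lt_ofReal_iff hv).mpr (by nlinarith)

end PolyGrowthAsdim

open PolyGrowthAsdim

theorem asdim_le_poly_growth_rate_general {X : Type*} [MetricSpace X]
    [TopologicalSpace.SeparableSpace X]
    [MeasurableSpace X] [BorelSpace X] (μ : Measure X)
    (hnc : ∃ v : ℝ, 0 < v ∧ ∀ x : X, ENNReal.ofReal v ≤ μ (ball x (1 / 2)))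
    (hfin : ∀ R : ℝ, (⨆ x : X, μ (ball x R)) ≠ ⊤)
    (ρ : ℝ)
    (hbdd : IsBoundedUnder (· ≤ ·) atTop
      (fun R : ℝ => Real.log (⨆ x : X, μ (ball x R)).toReal / Real.log (R + 1)))
    (hρ : limsup (fun R : ℝ => Real.log (⨆ x : X, μ (ball x R)).toReal / Real.log (R + 1))
      atTop = ρ) :
    ∀ r : ℝ, 0 < r → ∃ (D : ℝ) (U : Fin (⌊ρ⌋₊ + 1) → Set (Set X)),
      (∀ i, ∀ A ∈ U i, ∀ B ∈ U i, A ≠ B → ∀ a ∈ A, ∀ b ∈ B, r < dist a b) ∧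
      (∀ i, ∀ A ∈ U i, ∀ a ∈ A, ∀ b ∈ A, dist a b ≤ D) ∧
      (∀ x : X, ∃ i, ∃ A ∈ U i, x ∈ A) := by
  intro r hr
  obtain ⟨v, hv, hvb⟩ := hnc
  have hρn : ρ < ⌊ρ⌋₊ + 1 := Nat.lt_floor_add_one ρ
  obtain ⟨s, hρs, hs0, hsn⟩ : ∃ s, ρ < s ∧ 0 ≤ s ∧ s < ⌊ρ⌋₊ + 1 :=
    ⟨max ((ρ + (⌊ρ⌋₊ + 1)) / 2) 0, lt_max_of_lt_left (by linarith), le_max_right _ _,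
      max_lt (by linarith) (by positivity)⟩
  obtain ⟨C, hC0, hC⟩ := exists_le_mul_rpow_of_limsup_lt (f := fun R => ⨆ x, μ (ball x R))
    (fun _ _ h => iSup_mono fun x => measure_mono (ball_subset_ball h)) hfin hs0 hbdd (hρ ▸ hρs)
  obtain ⟨M, ε, hgrowth, hsmall⟩ := exists_scale_of_measure_ball_le_rpow (w := r + 2) hv hC0 hs0 hsn
    (by linarith) fun x T hT => (le_iSup (fun x => μ (ball x T)) x).trans (hC T hT)
  exact exists_separated_bounded_cover hvb (by linarith) (by linarith) hgrowth hsmall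

/-- A proper metric measure space that is volume noncollapsed
(`inf_x μ(B_{1/2}(x)) > 0`) and has finite polynomial volume growth rate
`ρ = limsup_{r→∞} log V(r) / log (r+1)` (with `V(r) = sup_x μ(B_r(x))`) has asymptotic
dimension at most `⌊ρ⌋`: for every `r > 0` there are `⌊ρ⌋ + 1` families of subsets,
each `r`-disjoint and uniformly bounded, covering `X`. -/
theorem asdim_le_poly_growth_rate {X : Type*} [MetricSpace X] [ProperSpace X]
    [CompleteSpace X] [TopologicalSpace.SeparableSpace X]
    [MeasurableSpace X] [BorelSpace X] (μ : Measure X)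
    (hsupp : ∀ (x : X) (ρ : ℝ), 0 < ρ → 0 < μ (ball x ρ))
    (hnontriv : ∃ (x : X) (ρ : ℝ), 0 < ρ ∧ 0 < μ (ball x ρ) ∧ μ (ball x ρ) < ⊤)
    (hnc : ∃ v : ℝ, 0 < v ∧ ∀ x : X, ENNReal.ofReal v ≤ μ (ball x (1 / 2)))
    (hfin : ∀ R : ℝ, (⨆ x : X, μ (ball x R)) ≠ ⊤)
    (ρ : ℝ)
    (hbdd : IsBoundedUnder (· ≤ ·) atTop
      (fun R : ℝ => Real.log (⨆ x : X, μ (ball x R)).toReal / Real.log (R + 1)))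
    (hρ : limsup (fun R : ℝ => Real.log (⨆ x : X, μ (ball x R)).toReal / Real.log (R + 1))
      atTop = ρ) :
    ∀ r : ℝ, 0 < r → ∃ (D : ℝ) (U : Fin (⌊ρ⌋₊ + 1) → Set (Set X)),
      (∀ i, ∀ A ∈ U i, ∀ B ∈ U i, A ≠ B → ∀ a ∈ A, ∀ b ∈ B, r < dist a b) ∧
      (∀ i, ∀ A ∈ U i, ∀ a ∈ A, ∀ b ∈ A, dist a b ≤ D) ∧
      (∀ x : X, ∃ i, ∃ A ∈ U i, x ∈ A) :=
  asdim_le_poly_growth_rate_general μ hnc hfin ρ hbdd hρ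
end
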